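/- For every m ∈ ℕ and every nonempty bounded open set K ⊆ ℝ³ there exists a constant C > 0 such that for every h > 0, every c ∈ ℝ³, and every polynomial map v : ℝ³ → ℝ³ of degree at most m, there exists an antisymmetric real 3×3 matrix B with ∫_{K_{h,c}} ‖∇v(x) + B‖_F² dx ≤ C · ∫_{K_{h,c}} ‖ε(v)(x)‖_F² dx. In particular, the Korn constant can be chosen independent of the size h and the position c of the element. -/

import Mathlib

open MeasureTheory Matrix

/-- `pderiv3 v i j x` is the partial derivative `∂ⱼ vᵢ (x)` of the `i`-th component of
`v : ℝ³ → ℝ³` in the `j`-th coordinate direction at `x`. -/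
noncomputable def pderiv3 (v : (Fin 3 → ℝ) → (Fin 3 → ℝ)) (i j : Fin 3) (x : Fin 3 → ℝ) : ℝ :=
  fderiv ℝ (fun y => v y i) x (Pi.single j 1)

/-- `jacMat v x` is the Jacobian matrix `∇v(x)` with entries `(∇v(x))ᵢⱼ = ∂ⱼvᵢ(x)`. -/
noncomputable def jacMat (v : (Fin 3 → ℝ) → (Fin 3 → ℝ)) (x : Fin 3 → ℝ) :
    Matrix (Fin 3) (Fin 3) ℝ :=
  Matrix.of fun i j => pderiv3 v i j x

/-- `symGrad v x` is the symmetric gradient `ε(v)(x)`, the 3×3 matrix with entries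
`(∂ⱼvᵢ(x) + ∂ᵢvⱼ(x)) / 2`. -/
noncomputable def symGrad (v : (Fin 3 → ℝ) → (Fin 3 → ℝ)) (x : Fin 3 → ℝ) :
    Matrix (Fin 3) (Fin 3) ℝ :=
  Matrix.of fun i j => (pderiv3 v i j x + pderiv3 v j i x) / 2

/-- `frobSq M` is the square of the Frobenius norm of the matrix `M`. -/
def frobSq (M : Matrix (Fin 3) (Fin 3) ℝ) : ℝ := ∑ i, ∑ j, (M i j) ^ 2

/-- The scaled element `K_{h,c} = { h·x + c : x ∈ K }`. -/
def scaledElt (K : Set (Fin 3 → ℝ)) (h : ℝ) (c : Fin 3 → ℝ) : Set (Fin 3 → ℝ) :=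
  (fun x => h • x + c) '' K


/-!
Polynomial maps of degree at most `m` form a finite-dimensional space. On it,
`P ↦ ∇P - skew(∇P(x₀))` and `P ↦ ε(P)` are linear maps into `L²(K)`. If `ε(P)` vanishes on the
open set `K`, then `∂ⱼPᵢ + ∂ᵢPⱼ = 0` identically, so every second derivative of `P` vanishes and
`∇P` is a constant antisymmetric matrix: the kernel of the second map lies in that of the first,
which on a finite-dimensional space yields a constant `C` with `‖∇P - skew(∇P(x₀))‖ ≤ C ‖ε(P)‖`.

The substitution `x ↦ h • x + c` preserves the degree and multiplies `∇P` and `ε(P)` by `h`,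
while the change of variables multiplies both integrals by `h³`; hence the constant for `K`
also works for every `K_{h,c}`, with `B` rescaled by `h⁻¹`.
-/

open MvPolynomial

namespace MvPolynomial

section Calculus

variable {σ : Type*} [Fintype σ]

theorem hasFDerivAt_eval (p : MvPolynomial σ ℝ) (x : σ → ℝ) :
    HasFDerivAt (fun y => eval y p)
      (∑ j, eval x (pderiv j p) • ContinuousLinearMap.proj (R := ℝ) (φ := fun _ : σ => ℝ) j)
      x := by
  classical
  induction p using MvPolynomial.induction_on with
  | C a => simpa using hasFDerivAt_const a x
  | add p q hp hq =>
    simp only [map_add, add_smul, Finset.sum_add_distrib]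
    exact hp.add hq
  | mul_X p i hp =>
    simp only [map_mul, eval_X]
    refine (hp.mul (hasFDerivAt_apply i x)).congr_fderiv ?_
    ext y
    simp [pderiv_X, Pi.single_apply, add_mul, Finset.sum_add_distrib, Finset.mul_sum,
      apply_ite, ite_mul, mul_assoc]

theorem fderiv_eval_apply_single [DecidableEq σ] (p : MvPolynomial σ ℝ) (x : σ → ℝ) (j : σ) :
    fderiv ℝ (fun y => eval y p) x (Pi.single j 1) = eval x (pderiv j p) := by
  simp [(hasFDerivAt_eval p x).fderiv, Pi.single_apply]

theorem eval_eq_eval_of_forall_pderiv_eq_zero {p : MvPolynomial σ ℝ}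
    (hp : ∀ k, pderiv k p = 0) (x y : σ → ℝ) : eval x p = eval y p :=
  is_const_of_fderiv_eq_zero (fun z => (hasFDerivAt_eval p z).differentiableAt)
    (fun z => by simp [(hasFDerivAt_eval p z).fderiv, hp]) x y

theorem eq_zero_of_eval_eq_zero_of_isOpen {p : MvPolynomial σ ℝ} {U : Set (σ → ℝ)}
    (hU : IsOpen U) (hne : U.Nonempty) (hp : ∀ x ∈ U, eval x p = 0) : p = 0 := by
  obtain ⟨x₀, hx₀⟩ := hne
  have hzero : (fun y => eval y p) =ᶠ[nhds x₀] 0 :=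
    Filter.eventually_of_mem (hU.mem_nhds hx₀) hp
  refine funext fun x => ?_
  simpa using (AnalyticOnNhd.eval_mvPolynomial p).eqOn_zero_of_preconnected_of_eventuallyEq_zero
    isPreconnected_univ (Set.mem_univ x₀) hzero (Set.mem_univ x)

end Calculus

section Algebra

variable {σ R : Type*}

theorem pderiv_pderiv_comm [CommSemiring R] (i j : σ) (p : MvPolynomial σ R) :
    pderiv i (pderiv j p) = pderiv j (pderiv i p) := by
  induction p using MvPolynomial.induction_on' with
  | monomial d a =>
    simp only [pderiv_monomial]
    rcases eq_or_ne i j with rfl | hij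
    · rfl
    · congr 1
      · rw [tsub_right_comm]
      · simp only [Finsupp.coe_tsub, Pi.sub_apply, Finsupp.single_eq_of_ne hij,
          Finsupp.single_eq_of_ne hij.symm, tsub_zero]
        ring
  | add p q hp hq => simp only [map_add, hp, hq]

/-- Going around the cycle `(i, j, k)` with the skew relation and the symmetry of second
derivatives turns `∂ₖ∂ⱼPᵢ` into its own negative. -/
theorem pderiv_pderiv_eq_zero_of_skew [CommRing R] [IsDomain R] [CharZero R]
    {P : σ → MvPolynomial σ R} (hP : ∀ i j, pderiv j (P i) + pderiv i (P j) = 0)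
    (i j k : σ) : pderiv k (pderiv j (P i)) = 0 := by
  have skew : ∀ i j, pderiv j (P i) = -pderiv i (P j) :=
    fun i j => eq_neg_of_add_eq_zero_left (hP i j)
  refine self_eq_neg.mp ?_
  calc pderiv k (pderiv j (P i))
      = -pderiv i (pderiv k (P j)) := by rw [skew i j, map_neg, pderiv_pderiv_comm]
    _ = pderiv j (pderiv i (P k)) := by rw [skew j k, map_neg, neg_neg, pderiv_pderiv_comm]
    _ = -pderiv k (pderiv j (P i)) := by rw [skew k i, map_neg, pderiv_pderiv_comm]

variable [CommSemiring R]

theorem totalDegree_aeval_le {g : σ → MvPolynomial σ R} (hg : ∀ i, (g i).totalDegree ≤ 1)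
    (p : MvPolynomial σ R) : (aeval g p).totalDegree ≤ p.totalDegree := by
  conv_lhs => rw [p.as_sum, map_sum]
  refine totalDegree_finsetSum_le fun d hd => ?_
  rw [aeval_monomial, Algebra.algebraMap_eq_smul_one, smul_one_mul]
  calc (coeff d p • d.prod fun i k => g i ^ k).totalDegree
      ≤ (d.prod fun i k => g i ^ k).totalDegree := totalDegree_smul_le _ _
    _ ≤ ∑ i ∈ d.support, (g i ^ d i).totalDegree := totalDegree_finsetProd _ _
    _ ≤ ∑ i ∈ d.support, d i := Finset.sum_le_sum fun i _ =>
        (totalDegree_pow _ _).trans (by simpa using Nat.mul_le_mul_left (d i) (hg i))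
    _ ≤ p.totalDegree := le_totalDegree hd

noncomputable def homothetySubst (a : R) (c : σ → R) : MvPolynomial σ R →ₐ[R] MvPolynomial σ R :=
  aeval fun j => C a * X j + C (c j)

theorem eval_homothetySubst (a : R) (c : σ → R) (p : MvPolynomial σ R) (y : σ → R) :
    eval y (homothetySubst a c p) = eval (a • y + c) p := by
  induction p using MvPolynomial.induction_on with
  | C r => simp [homothetySubst]
  | add p q hp hq => simp only [map_add, hp, hq]
  | mul_X p i hp => simp_all [homothetySubst]

theorem totalDegree_homothetySubst_le (a : R) (c : σ → R) (p : MvPolynomial σ R) :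
    (homothetySubst a c p).totalDegree ≤ p.totalDegree := by
  refine totalDegree_aeval_le (fun j => (totalDegree_add _ _).trans <| max_le ?_ (by simp)) p
  refine (totalDegree_mul _ _).trans ?_
  rw [totalDegree_C, zero_add, X]
  exact (totalDegree_monomial_le _ _).trans (by simp)

end Algebra

theorem eval_pderiv_homothetySubst {σ : Type*} [Fintype σ] [DecidableEq σ] (a : ℝ) (c : σ → ℝ)
    (p : MvPolynomial σ ℝ) (j : σ) (y : σ → ℝ) :
    eval y (pderiv j (homothetySubst a c p)) = a * eval (a • y + c) (pderiv j p) := by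
  have hcomp : HasFDerivAt (fun y => eval y (homothetySubst a c p))
      ((fderiv ℝ (fun z => eval z p) (a • y + c)).comp (a • ContinuousLinearMap.id ℝ _)) y := by
    simp only [eval_homothetySubst]
    exact (hasFDerivAt_eval p _).differentiableAt.hasFDerivAt.comp y
      (((hasFDerivAt_id y).const_smul a).add_const c)
  rw [← fderiv_eval_apply_single, hcomp.fderiv]
  simp [fderiv_eval_apply_single]

end MvPolynomial

theorem LinearMap.exists_norm_le_mul_norm_of_ker_le {V E F : Type*} [AddCommGroup V]
    [Module ℝ V] [FiniteDimensional ℝ V] [NormedAddCommGroup E] [NormedSpace ℝ E]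
    [NormedAddCommGroup F] [NormedSpace ℝ F] (f : V →ₗ[ℝ] E) (g : V →ₗ[ℝ] F)
    (hker : LinearMap.ker g ≤ LinearMap.ker f) :
    ∃ C > 0, ∀ v, ‖f v‖ ≤ C * ‖g v‖ := by
  -- `f` factors through `g` via a linear map on the finite-dimensional space `range g`.
  let u : LinearMap.range g →L[ℝ] E := LinearMap.toContinuousLinearMap <|
    (Submodule.liftQ _ f hker).comp g.quotKerEquivRange.symm.toLinearMap
  have hu : ∀ v, f v = u (g.rangeRestrict v) := fun v => by
    have hv : g.rangeRestrict v = g.quotKerEquivRange (Submodule.Quotient.mk v) := by ext; simp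
    simp [u, hv]
  refine ⟨‖u‖ + 1, by positivity, fun v => ?_⟩
  calc ‖f v‖ ≤ ‖u‖ * ‖g v‖ := by rw [hu]; exact u.le_opNorm _
    _ ≤ (‖u‖ + 1) * ‖g v‖ := by gcongr; linarith

namespace MeasureTheory

section L2

variable {X E : Type*} [MeasurableSpace X] {μ : Measure X} [NormedAddCommGroup E]

theorem MemLp.norm_toLp_sq {f : X → E} (hf : MemLp f 2 μ) :
    ‖hf.toLp f‖ ^ 2 = ∫ x, ‖f x‖ ^ 2 ∂μ := by
  rw [Lp.norm_toLp, hf.eLpNorm_eq_integral_rpow_norm two_ne_zero ENNReal.ofNat_ne_top,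
    ENNReal.toReal_ofReal (by positivity), ← Real.rpow_natCast, ← Real.rpow_mul
    (integral_nonneg fun x => by positivity)]
  simp

theorem MemLp.toLp_eq_zero_iff {p : ENNReal} {f : X → E} (hf : MemLp f p μ) :
    hf.toLp f = 0 ↔ f =ᵐ[μ] 0 := by
  rw [← hf.toLp_eq_toLp_iff MemLp.zero, MemLp.toLp_zero]

variable {V : Type*} [AddCommGroup V] [Module ℝ V] [NormedSpace ℝ E]

noncomputable def _root_.LinearMap.toLp {p : ENNReal} [Fact (1 ≤ p)] (A : V →ₗ[ℝ] X → E)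
    (hA : ∀ v, MemLp (A v) p μ) : V →ₗ[ℝ] Lp E p μ where
  toFun v := (hA v).toLp (A v)
  map_add' v w := by simp_rw [map_add]; exact MemLp.toLp_add _ _
  map_smul' r v := by simp_rw [map_smul]; exact MemLp.toLp_const_smul _ _

theorem exists_integral_norm_sq_le_of_ae_eq_zero [FiniteDimensional ℝ V] (A B : V →ₗ[ℝ] X → E)
    (hA : ∀ v, MemLp (A v) 2 μ) (hB : ∀ v, MemLp (B v) 2 μ)
    (hker : ∀ v, B v =ᵐ[μ] 0 → A v =ᵐ[μ] 0) :
    ∃ C > 0, ∀ v, ∫ x, ‖A v x‖ ^ 2 ∂μ ≤ C * ∫ x, ‖B v x‖ ^ 2 ∂μ := by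
  have hker' : LinearMap.ker (B.toLp hB) ≤ LinearMap.ker (A.toLp hA) := fun v hv => by
    simp only [LinearMap.mem_ker, LinearMap.toLp, LinearMap.coe_mk, AddHom.coe_mk,
      MemLp.toLp_eq_zero_iff] at hv ⊢
    exact hker v hv
  obtain ⟨C, hC, hbound⟩ := LinearMap.exists_norm_le_mul_norm_of_ker_le _ _ hker'
  refine ⟨C ^ 2, by positivity, fun v => ?_⟩
  rw [← (hA v).norm_toLp_sq, ← (hB v).norm_toLp_sq, ← mul_pow]
  exact pow_le_pow_left₀ (norm_nonneg _) (hbound v) 2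

end L2

theorem _root_.Continuous.memLp_restrict_of_isBounded {X E : Type*} [MeasurableSpace X]
    [PseudoMetricSpace X] [ProperSpace X] [OpensMeasurableSpace X] {μ : Measure X}
    [IsFiniteMeasureOnCompacts μ] [NormedAddCommGroup E] {f : X → E} (hf : Continuous f)
    {K : Set X} (hK : Bornology.IsBounded K) (p : ENNReal) : MemLp f p (μ.restrict K) := by
  have : IsFiniteMeasure (μ.restrict K) := ⟨by simpa using hK.measure_lt_top⟩
  obtain ⟨C, hC⟩ := hK.isCompact_closure.exists_bound_of_continuousOn hf.continuousOn
  exact .of_bound hf.aestronglyMeasurable C <| ae_restrict_of_ae_restrict_of_subset subset_closure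
    (ae_restrict_of_forall_mem measurableSet_closure hC)

theorem setIntegral_image_homothety {ι E : Type*} [Fintype ι] [NormedAddCommGroup E]
    [NormedSpace ℝ E] {K : Set (ι → ℝ)} (hK : MeasurableSet K) {h : ℝ} (hh : h ≠ 0)
    (c : ι → ℝ) (F : (ι → ℝ) → E) :
    ∫ x in (fun y => h • y + c) '' K, F x = |h| ^ Fintype.card ι • ∫ y in K, F (h • y + c) := by
  have hderiv : ∀ y, HasFDerivAt (fun y : ι → ℝ => h • y + c)
      (h • ContinuousLinearMap.id ℝ (ι → ℝ)) y :=
    fun y => ((hasFDerivAt_id y).const_smul h).add_const c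
  have hinj : Function.Injective fun y : ι → ℝ => h • y + c :=
    fun y z hyz => smul_right_injective _ hh (add_right_cancel hyz)
  rw [integral_image_eq_integral_abs_det_fderiv_smul volume hK
    (fun y _ => (hderiv y).hasFDerivWithinAt) hinj.injOn, integral_smul]
  simp [ContinuousLinearMap.det, LinearMap.det_smul]

end MeasureTheory

open MeasureTheory

namespace Matrix

variable {n : Type*}

noncomputable def symmPart : Matrix n n ℝ →ₗ[ℝ] Matrix n n ℝ :=
  (2 : ℝ)⁻¹ • (LinearMap.id + (transposeLinearEquiv n n ℝ ℝ).toLinearMap)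

noncomputable def skewPart : Matrix n n ℝ →ₗ[ℝ] Matrix n n ℝ :=
  (2 : ℝ)⁻¹ • (LinearMap.id - (transposeLinearEquiv n n ℝ ℝ).toLinearMap)

theorem symmPart_apply (M : Matrix n n ℝ) : symmPart M = (2 : ℝ)⁻¹ • (M + Mᵀ) := rfl

theorem skewPart_apply (M : Matrix n n ℝ) : skewPart M = (2 : ℝ)⁻¹ • (M - Mᵀ) := rfl

theorem transpose_skewPart (M : Matrix n n ℝ) : (skewPart M)ᵀ = -skewPart M := by
  rw [skewPart_apply, transpose_smul, transpose_sub, transpose_transpose, ← smul_neg, neg_sub]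

theorem skewPart_of_transpose_eq_neg {M : Matrix n n ℝ} (hM : Mᵀ = -M) : skewPart M = M := by
  rw [skewPart_apply, hM, sub_neg_eq_add, ← two_smul ℝ, smul_smul, inv_mul_cancel₀ two_ne_zero,
    one_smul]

end Matrix

attribute [local instance] Matrix.frobeniusNormedAddCommGroup Matrix.frobeniusNormedSpace

section Korn

variable {ι : Type*}

noncomputable def polyJacobian : (ι → MvPolynomial ι ℝ) →ₗ[ℝ] (ι → ℝ) → Matrix ι ι ℝ where
  toFun P x := of fun i j => eval x (pderiv j (P i))
  map_add' P Q := by ext; simp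
  map_smul' r P := by ext; simp

theorem continuous_polyJacobian (P : ι → MvPolynomial ι ℝ) : Continuous (polyJacobian P) :=
  continuous_matrix fun i j => by
    simpa [polyJacobian] using MvPolynomial.continuous_eval (pderiv j (P i))

theorem transpose_polyJacobian_of_skew {P : ι → MvPolynomial ι ℝ}
    (hP : ∀ i j, pderiv j (P i) + pderiv i (P j) = 0) (x : ι → ℝ) :
    (polyJacobian P x)ᵀ = -polyJacobian P x := by
  ext i j
  simpa [polyJacobian, eq_neg_iff_add_eq_zero] using congrArg (eval x) (hP j i)

variable [Fintype ι]

theorem pderiv_add_pderiv_eq_zero_of_symmPart_eq_zero {P : ι → MvPolynomial ι ℝ}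
    {K : Set (ι → ℝ)} (hKo : IsOpen K) (hKne : K.Nonempty)
    (hP : ∀ x ∈ K, Matrix.symmPart (polyJacobian P x) = 0) (i j : ι) :
    pderiv j (P i) + pderiv i (P j) = 0 :=
  eq_zero_of_eval_eq_zero_of_isOpen hKo hKne fun x hx => by
    simpa [Matrix.symmPart_apply, polyJacobian] using congrFun₂ (hP x hx) i j

theorem polyJacobian_eq_of_skew {P : ι → MvPolynomial ι ℝ}
    (hP : ∀ i j, pderiv j (P i) + pderiv i (P j) = 0) (x y : ι → ℝ) :
    polyJacobian P x = polyJacobian P y := by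
  ext i j
  exact eval_eq_eval_of_forall_pderiv_eq_zero (pderiv_pderiv_eq_zero_of_skew hP i j) x y

theorem polyJacobian_homothetySubst [DecidableEq ι] (h : ℝ) (c : ι → ℝ)
    (P : ι → MvPolynomial ι ℝ) (y : ι → ℝ) :
    polyJacobian (fun i => homothetySubst h c (P i)) y = h • polyJacobian P (h • y + c) := by
  ext i j
  simp [polyJacobian, eval_pderiv_homothetySubst]

theorem exists_korn_bound_polynomial (m : ℕ) {K : Set (ι → ℝ)} (hKo : IsOpen K)
    (hKne : K.Nonempty) (hKbd : Bornology.IsBounded K) :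
    ∃ C > 0, ∀ P : ι → MvPolynomial ι ℝ, (∀ i, (P i).totalDegree ≤ m) →
      ∃ B : Matrix ι ι ℝ, Bᵀ = -B ∧
        ∫ x in K, ‖polyJacobian P x + B‖ ^ 2 ≤
          C * ∫ x in K, ‖Matrix.symmPart (polyJacobian P x)‖ ^ 2 := by
  obtain ⟨x₀, hx₀⟩ := hKne
  let incl := LinearMap.piMap fun _ : ι => (restrictTotalDegree ι ℝ m).subtype
  let defect := polyJacobian -
    LinearMap.pi (fun _ => Matrix.skewPart ∘ₗ LinearMap.proj x₀) ∘ₗ polyJacobian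
  let strain := LinearMap.compLeft Matrix.symmPart (ι → ℝ) ∘ₗ polyJacobian
  have hcont : ∀ P, Continuous (defect P) ∧ Continuous (strain P) := fun P =>
    ⟨(continuous_polyJacobian P).sub continuous_const,
      (LinearMap.continuous_of_finiteDimensional Matrix.symmPart).comp (continuous_polyJacobian P)⟩
  have hker : ∀ P, strain P =ᵐ[volume.restrict K] 0 → defect P =ᵐ[volume.restrict K] 0 := by
    intro P hP
    have hskew := pderiv_add_pderiv_eq_zero_of_symmPart_eq_zero hKo ⟨x₀, hx₀⟩
      (Measure.eqOn_open_of_ae_eq hP hKo (hcont P).2.continuousOn continuousOn_const)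
    refine ae_of_all _ fun x => ?_
    simp [defect, polyJacobian_eq_of_skew hskew x x₀,
      Matrix.skewPart_of_transpose_eq_neg (transpose_polyJacobian_of_skew hskew x₀)]
  obtain ⟨C, hC, hbound⟩ := exists_integral_norm_sq_le_of_ae_eq_zero (defect ∘ₗ incl)
    (strain ∘ₗ incl) (fun P => (hcont (incl P)).1.memLp_restrict_of_isBounded hKbd 2)
    (fun P => (hcont (incl P)).2.memLp_restrict_of_isBounded hKbd 2) (fun P => hker (incl P))
  refine ⟨C, hC, fun P hP => ⟨-Matrix.skewPart (polyJacobian P x₀), by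
    rw [Matrix.transpose_neg, Matrix.transpose_skewPart], ?_⟩⟩
  let Pm : ι → restrictTotalDegree ι ℝ m :=
    fun i => ⟨P i, (mem_restrictTotalDegree ι m (P i)).mpr (hP i)⟩
  have hPm : incl Pm = P := rfl
  simpa [defect, strain, hPm, sub_eq_add_neg] using hbound Pm

theorem exists_korn_bound_polynomial_homothety (m : ℕ) {K : Set (ι → ℝ)} (hKo : IsOpen K)
    (hKne : K.Nonempty) (hKbd : Bornology.IsBounded K) :
    ∃ C > 0, ∀ h : ℝ, h ≠ 0 → ∀ c : ι → ℝ, ∀ P : ι → MvPolynomial ι ℝ,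
      (∀ i, (P i).totalDegree ≤ m) → ∃ B : Matrix ι ι ℝ, Bᵀ = -B ∧
        ∫ x in (fun y => h • y + c) '' K, ‖polyJacobian P x + B‖ ^ 2 ≤
          C * ∫ x in (fun y => h • y + c) '' K, ‖Matrix.symmPart (polyJacobian P x)‖ ^ 2 := by
  classical
  obtain ⟨C, hC, hKorn⟩ := exists_korn_bound_polynomial m hKo hKne hKbd
  refine ⟨C, hC, fun h hh c P hP => ?_⟩
  obtain ⟨B, hB, hle⟩ := hKorn (fun i => homothetySubst h c (P i))
    fun i => (totalDegree_homothetySubst_le h c (P i)).trans (hP i)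
  have hJ : ∀ y, polyJacobian P (h • y + c) =
      h⁻¹ • polyJacobian (fun i => homothetySubst h c (P i)) y := fun y => by
    rw [polyJacobian_homothetySubst, inv_smul_smul₀ hh]
  refine ⟨h⁻¹ • B, by rw [Matrix.transpose_smul, hB, smul_neg], ?_⟩
  simp only [setIntegral_image_homothety hKo.measurableSet hh, hJ, ← smul_add,
    map_smul, norm_smul, mul_pow, integral_const_mul, smul_eq_mul]
  linear_combination mul_le_mul_of_nonneg_left hle
    (by positivity : (0 : ℝ) ≤ |h| ^ Fintype.card ι * ‖h⁻¹‖ ^ 2)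

end Korn

theorem frobSq_eq_norm_sq (M : Matrix (Fin 3) (Fin 3) ℝ) : frobSq M = ‖M‖ ^ 2 := by
  rw [Matrix.frobenius_norm_def, ← Real.rpow_natCast, ← Real.rpow_mul (by positivity)]
  simp [frobSq]

theorem jacMat_eval_eq_polyJacobian (P : Fin 3 → MvPolynomial (Fin 3) ℝ) (x : Fin 3 → ℝ) :
    jacMat (fun y i => eval y (P i)) x = polyJacobian P x := by
  ext i j
  simp [jacMat, pderiv3, polyJacobian, fderiv_eval_apply_single]

theorem symGrad_eval_eq_symmPart (P : Fin 3 → MvPolynomial (Fin 3) ℝ) (x : Fin 3 → ℝ) :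
    symGrad (fun y i => eval y (P i)) x = Matrix.symmPart (polyJacobian P x) := by
  ext i j
  simp [symGrad, pderiv3, polyJacobian, fderiv_eval_apply_single, Matrix.symmPart_apply,
    div_eq_inv_mul]

/-- Elementwise Korn inequality with a constant independent of element size and position:
for every degree bound `m` and nonempty bounded open `K ⊆ ℝ³` there is `C > 0` such that
for all `h > 0`, `c ∈ ℝ³` and every polynomial map `v` of degree at most `m`, there is an
antisymmetric `B` with `∫_{K_{h,c}} ‖∇v + B‖_F² ≤ C ∫_{K_{h,c}} ‖ε(v)‖_F²`. -/
theorem korn_polynomial_scaled (m : ℕ) (K : Set (Fin 3 → ℝ)) (hKo : IsOpen K)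
    (hKne : K.Nonempty) (hKbd : Bornology.IsBounded K) :
    ∃ C > 0, ∀ h : ℝ, 0 < h → ∀ c : Fin 3 → ℝ,
      ∀ P : Fin 3 → MvPolynomial (Fin 3) ℝ, (∀ i, (P i).totalDegree ≤ m) →
        ∃ B : Matrix (Fin 3) (Fin 3) ℝ, Bᵀ = -B ∧
          (∫ x in scaledElt K h c,
              frobSq (jacMat (fun y i => MvPolynomial.eval y (P i)) x + B)) ≤
            C * ∫ x in scaledElt K h c,
              frobSq (symGrad (fun y i => MvPolynomial.eval y (P i)) x) := by
  obtain ⟨C, hC, hKorn⟩ := exists_korn_bound_polynomial_homothety m hKo hKne hKbd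
  refine ⟨C, hC, fun h hh c P hP => ?_⟩
  obtain ⟨B, hB, hle⟩ := hKorn h hh.ne' c P hP
  refine ⟨B, hB, ?_⟩
  simpa only [scaledElt, jacMat_eval_eq_polyJacobian, symGrad_eval_eq_symmPart,
    frobSq_eq_norm_sq] using hle
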